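/- arXiv:2305.11590 — 2 statements merged into one kernel-verified Lean document; each statement's English description precedes it below -/
import Mathlib

section
/- The relation on states of the non-atomic walk defined by s ≤ s' iff H̃(s, s̄') ≤ H̃(s', s̄) is transitive; consequently there exists a 'hidden' state s such that H̃(s, s̄') ≤ H̃(s', s̄) for all states s'. -/
open Finset

/-- State space of the non-atomic walk: original vertices plus directed intermediate states. -/
def NAState (V : Type*) (G : SimpleGraph V) : Type _ :=
  V ⊕ {p : V × V // G.Adj p.1 p.2}

namespace NAState

variable {V : Type*} {G : SimpleGraph V}

/-- Original-vertex state. -/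
def orig (v : V) : NAState V G := Sum.inl v

/-- Intermediate state `s_{ab}`, directed from `a` to `b`. -/
def intm (a b : V) (h : G.Adj a b) : NAState V G := Sum.inr ⟨(a, b), h⟩

/-- Direction reversal: fixes original vertices, reverses intermediate states. -/
def bar : NAState V G → NAState V G
  | Sum.inl v => Sum.inl v
  | Sum.inr ⟨(a, b), h⟩ => Sum.inr ⟨(b, a), h.symm⟩

variable [Fintype V] [DecidableRel G.Adj]

/-- The number `d_s` of adjacent states of a state. -/
def asDeg : NAState V G → ℝ
  | Sum.inl v => (G.degree v : ℝ)
  | Sum.inr _ => 1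

/-- Sum of `f` over the adjacent states `N_as(s)` of a state. -/
def asSum (f : NAState V G → ℝ) : NAState V G → ℝ
  | Sum.inl v => ∑ w ∈ (G.neighborFinset v).attach,
      f (Sum.inr ⟨(v, w.1), (G.mem_neighborFinset _ _).mp w.2⟩)
  | Sum.inr ⟨(_, b), _⟩ => f (Sum.inl b)

end NAState

/-
For the walk's Laplacian `L f (s) = d_s f(s) - ∑_{s' ∈ N(s)} f(s')`, the hitting-time
recurrence says `L H̃(·, t) (s) = d_s` for `s ≠ t`; since `∑_s L f (s) = 0`, this gives
`L H̃(·, t) = d - W δ_t` with `W = ∑_s d_s`. Reversing a state reverses its transitions, so `L` is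
self-adjoint for the twisted pairing `⟨f, g⟩ = ∑_s f(s) g(s̄)`. Pairing `L H̃(·, ȳ)` with
`H̃(·, x̄)` gives `W H̃(x, ȳ) + β(x) = W H̃(y, x̄) + β(y)` for `β(x) = ∑_s d_s H̃(s̄, x̄)`
(equivalently, the extended triangle equality). Hence `H̃(x, ȳ) ≤ H̃(y, x̄)` iff `β(y) ≤ β(x)`:
the relation is induced by a potential, so it is transitive and any maximiser of `β` is hidden.
When `G` has no edge, `W = 0`, but then connectedness leaves a single state.
-/

namespace SimpleGraph

variable {V : Type*} (G : SimpleGraph V) [Fintype V] [DecidableRel G.Adj]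

lemma sum_comp_adj_swap (F : {p : V × V // G.Adj p.1 p.2} → ℝ) :
    ∑ e : {p : V × V // G.Adj p.1 p.2}, F ⟨e.1.swap, e.2.symm⟩ = ∑ e, F e :=
  (Equiv.subtypeEquiv (Equiv.prodComm V V) fun _ => G.adj_comm _ _).sum_comp F

lemma sum_sum_neighborFinset_attach (F : {p : V × V // G.Adj p.1 p.2} → ℝ) :
    ∑ v, ∑ w ∈ (G.neighborFinset v).attach, F ⟨(v, w), (G.mem_neighborFinset v w).1 w.2⟩ =
      ∑ e, F e := by
  rw [← (Equiv.subtypeProdEquivSigmaSubtype fun v w => G.Adj v w).symm.sum_comp,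
    Fintype.sum_sigma]
  refine Finset.sum_congr rfl fun v _ => ?_
  rw [← Finset.univ_eq_attach]
  exact Fintype.sum_equiv (Equiv.subtypeEquivRight fun w => G.mem_neighborFinset v w) _ _
    fun _ => rfl

end SimpleGraph

namespace NAState

variable {V : Type*} {G : SimpleGraph V}

lemma bar_bar (s : NAState V G) : s.bar.bar = s := by
  rcases s with v | ⟨⟨a, b⟩, h⟩ <;> rfl

instance [Subsingleton V] : Subsingleton (NAState V G) := by
  refine ⟨fun s t => ?_⟩
  rcases s with u | ⟨⟨a, b⟩, h⟩
  · rcases t with v | ⟨⟨a, b⟩, h⟩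
    · exact congrArg Sum.inl (Subsingleton.elim u v)
    · exact (h.ne (Subsingleton.elim a b)).elim
  · exact (h.ne (Subsingleton.elim a b)).elim

variable [Fintype V] [DecidableRel G.Adj]

instance : Fintype (NAState V G) :=
  inferInstanceAs (Fintype (V ⊕ {p : V × V // G.Adj p.1 p.2}))

lemma asDeg_bar (s : NAState V G) : s.bar.asDeg = s.asDeg := by
  rcases s with v | ⟨⟨a, b⟩, h⟩ <;> rfl

lemma asDeg_nonneg (s : NAState V G) : 0 ≤ s.asDeg := by
  rcases s with v | e
  · exact Nat.cast_nonneg _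
  · exact zero_le_one

lemma asSum_one (s : NAState V G) : asSum (fun _ => 1) s = s.asDeg := by
  rcases s with v | ⟨⟨a, b⟩, h⟩
  · simp [asSum, asDeg]
  · rfl

lemma sum_comp_bar (F : NAState V G → ℝ) : ∑ s : NAState V G, F s.bar = ∑ s, F s :=
  Fintype.sum_equiv (Function.Involutive.toPerm bar bar_bar) _ _ fun _ => rfl

variable (G) in
def totalDeg : ℝ := ∑ s : NAState V G, s.asDeg

variable (G) in
lemma totalDeg_pos {a b : V} (h : G.Adj a b) : 0 < totalDeg G :=
  one_pos.trans_le <|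
    Finset.single_le_sum (fun s _ => asDeg_nonneg s) (Finset.mem_univ (intm a b h))

lemma sum_asSum_mul (f g : NAState V G → ℝ) :
    ∑ s, asSum f s * g s = ∑ e : {p : V × V // G.Adj p.1 p.2},
      (f (Sum.inr e : NAState V G) * g (Sum.inl e.1.1) +
        f (Sum.inl e.1.2) * g (Sum.inr e : NAState V G)) := by
  refine (Fintype.sum_sum_type (fun s : NAState V G => asSum f s * g s)).trans ?_
  rw [Finset.sum_add_distrib,
    ← G.sum_sum_neighborFinset_attach fun e => f (Sum.inr e) * g (Sum.inl e.1.1)]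
  congr 1
  exact Finset.sum_congr rfl fun v _ => Finset.sum_mul _ _ _

lemma sum_asSum_mul_bar_comm (f g : NAState V G → ℝ) :
    ∑ s, asSum f s * g s.bar = ∑ s, asSum g s * f s.bar := by
  rw [sum_asSum_mul, sum_asSum_mul]
  conv_rhs => rw [← G.sum_comp_adj_swap]
  exact Finset.sum_congr rfl fun e _ => by
    rw [add_comm]; exact congrArg₂ (· + ·) (mul_comm _ _) (mul_comm _ _)

def laplacian (f : NAState V G → ℝ) (s : NAState V G) : ℝ := s.asDeg * f s - asSum f s

lemma sum_laplacian_mul_bar_comm (f g : NAState V G → ℝ) :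
    ∑ s, laplacian f s * g s.bar = ∑ s, laplacian g s * f s.bar := by
  have hdeg : ∑ s, s.asDeg * f s * g s.bar = ∑ s, s.asDeg * g s * f s.bar := by
    rw [← sum_comp_bar]
    exact Finset.sum_congr rfl fun s _ => by rw [asDeg_bar, bar_bar]; ring
  simp only [laplacian, sub_mul, Finset.sum_sub_distrib, hdeg, sum_asSum_mul_bar_comm f g]

lemma sum_laplacian (f : NAState V G → ℝ) : ∑ s, laplacian f s = 0 := by
  have h := sum_laplacian_mul_bar_comm f (fun _ => 1)
  simpa [laplacian, asSum_one] using h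

lemma sum_laplacian_mul_of_ne {f : NAState V G → ℝ} {t : NAState V G}
    (hf : ∀ s, s ≠ t → laplacian f s = s.asDeg) (g : NAState V G → ℝ) :
    ∑ s, laplacian f s * g s = ∑ s, s.asDeg * g s - totalDeg G * g t := by
  have hsingle : ∀ h : NAState V G → ℝ,
      ∑ s, (laplacian f s - s.asDeg) * h s = (laplacian f t - t.asDeg) * h t := fun h =>
    Finset.sum_eq_single t (fun s _ hs => by rw [hf s hs, sub_self, zero_mul]) (by simp)
  -- `∑ s, laplacian f s = 0` forces `laplacian f t = t.asDeg - totalDeg G`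
  have ht := hsingle 1
  have hg := hsingle g
  simp only [Pi.one_apply, mul_one, Finset.sum_sub_distrib, sum_laplacian] at ht
  simp only [sub_mul, Finset.sum_sub_distrib] at hg
  rw [totalDeg]
  linear_combination hg - ht * g t

lemma laplacian_hittingTime_of_ne {Ht : NAState V G → NAState V G → ℝ}
    (hHtorig : ∀ (v : V) (s : NAState V G), orig v ≠ s →
      Ht (orig v) s = 1 + (1 / (G.degree v : ℝ)) * asSum (fun z => Ht z s) (orig v))
    (hHtintm : ∀ (a b : V) (h : G.Adj a b) (s : NAState V G), intm a b h ≠ s →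
      Ht (intm a b h) s = 1 + Ht (orig b) s)
    {s t : NAState V G} (hst : s ≠ t) : laplacian (fun z => Ht z t) s = s.asDeg := by
  rcases s with v | ⟨⟨a, b⟩, h⟩
  · have hrec := hHtorig v t hst
    simp only [orig] at hrec
    simp only [laplacian, asDeg]
    rw [hrec]
    rcases eq_or_ne (G.degree v : ℝ) 0 with hd | hd
    -- an isolated vertex: `1 / 0 = 0` in the recurrence, and its neighbour sum is empty
    · have hN : G.neighborFinset v = ∅ := by
        rw [← Finset.card_eq_zero, G.card_neighborFinset_eq_degree]
        exact_mod_cast hd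
      have hA : asSum (fun z => Ht z t) (Sum.inl v) = 0 :=
        Finset.sum_eq_zero fun w _ => absurd w.2 (by simp [hN])
      rw [hA, hd]
      ring
    · field_simp
      ring
  · simp only [laplacian, asDeg, one_mul]
    rw [show Ht (Sum.inr ⟨(a, b), h⟩) t = _ from hHtintm a b h t hst]
    simp [asSum, orig]

def potential (Ht : NAState V G → NAState V G → ℝ) (x : NAState V G) : ℝ :=
  ∑ s : NAState V G, s.asDeg * Ht s.bar x.bar

lemma totalDeg_mul_add_potential_comm {Ht : NAState V G → NAState V G → ℝ}
    (hHt : ∀ s t, s ≠ t → laplacian (fun z => Ht z t) s = s.asDeg) (x y : NAState V G) :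
    totalDeg G * Ht x y.bar + potential Ht x = totalDeg G * Ht y x.bar + potential Ht y := by
  have h := sum_laplacian_mul_bar_comm (fun z => Ht z y.bar) (fun z => Ht z x.bar)
  rw [sum_laplacian_mul_of_ne (hHt · y.bar), sum_laplacian_mul_of_ne (hHt · x.bar)] at h
  simp only [bar_bar] at h
  rw [potential, potential]
  linarith

lemma le_iff_potential_le {Ht : NAState V G → NAState V G → ℝ} (hconn : G.Connected)
    (hHt : ∀ s t, s ≠ t → laplacian (fun z => Ht z t) s = s.asDeg) (x y : NAState V G) :
    Ht x y.bar ≤ Ht y x.bar ↔ potential Ht y ≤ potential Ht x := by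
  by_cases hadj : ∃ a b, G.Adj a b
  · obtain ⟨a, b, hab⟩ := hadj
    have h := totalDeg_mul_add_potential_comm hHt x y
    rw [← mul_le_mul_iff_right₀ (totalDeg_pos G hab)]
    constructor <;> intro <;> linarith
  · have hbot : G = ⊥ := G.eq_bot_iff_forall_not_adj.2 fun a b hab => hadj ⟨a, b, hab⟩
    have : Subsingleton V := (SimpleGraph.connected_bot_iff.1 (hbot ▸ hconn)).1
    rw [Subsingleton.elim x y]
    exact iff_of_true le_rfl le_rfl

end NAState

theorem stmt6_general {V : Type*} [Fintype V] (G : SimpleGraph V)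
    [DecidableRel G.Adj] (hconn : G.Connected)
    (Ht : NAState V G → NAState V G → ℝ)
    (hHtorig : ∀ (v : V) (s : NAState V G), NAState.orig v ≠ s →
      Ht (NAState.orig v) s =
        1 + (1 / (G.degree v : ℝ)) * NAState.asSum (fun z => Ht z s) (NAState.orig v))
    (hHtintm : ∀ (a b : V) (h : G.Adj a b) (s : NAState V G), NAState.intm a b h ≠ s →
      Ht (NAState.intm a b h) s = 1 + Ht (NAState.orig b) s) :
    (∀ x y z : NAState V G,
        Ht x y.bar ≤ Ht y x.bar → Ht y z.bar ≤ Ht z y.bar → Ht x z.bar ≤ Ht z x.bar) ∧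
      ∃ s : NAState V G, ∀ s' : NAState V G, Ht s s'.bar ≤ Ht s' s.bar := by
  have hle := NAState.le_iff_potential_le hconn fun s t hst =>
    NAState.laplacian_hittingTime_of_ne hHtorig hHtintm hst
  refine ⟨fun x y z hxy hyz => (hle x z).2 (((hle y z).1 hyz).trans ((hle x y).1 hxy)), ?_⟩
  have : Nonempty (NAState V G) := ⟨.orig hconn.nonempty.some⟩
  obtain ⟨s, hs⟩ := Finite.exists_max (NAState.potential Ht)
  exact ⟨s, fun s' => (hle s s').2 (hs s')⟩

theorem stmt6 {V : Type*} [Fintype V] [DecidableEq V] (G : SimpleGraph V)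
    [DecidableRel G.Adj] (hconn : G.Connected)
    (Ht : NAState V G → NAState V G → ℝ)
    (hHt0 : ∀ s, Ht s s = 0)
    (hHtorig : ∀ (v : V) (s : NAState V G), NAState.orig v ≠ s →
      Ht (NAState.orig v) s =
        1 + (1 / (G.degree v : ℝ)) * NAState.asSum (fun z => Ht z s) (NAState.orig v))
    (hHtintm : ∀ (a b : V) (h : G.Adj a b) (s : NAState V G), NAState.intm a b h ≠ s →
      Ht (NAState.intm a b h) s = 1 + Ht (NAState.orig b) s) :
    (∀ x y z : NAState V G,
        Ht x y.bar ≤ Ht y x.bar → Ht y z.bar ≤ Ht z y.bar → Ht x z.bar ≤ Ht z x.bar) ∧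
      ∃ s : NAState V G, ∀ s' : NAState V G, Ht s s'.bar ≤ Ht s' s.bar :=
  stmt6_general G hconn Ht hHtorig hHtintm
end

section
/- On the complete graph K_n, the extended hitting time between any two intermediate states of the non-atomic walk is O(n²); more precisely H̃(s_{ab}, s_{cd}) = 1 + H̃(b,c) + H̃(c, s_{cd}) where H̃(b,c) = O(n) and H̃(c, s_{cd}) = Θ(n²). -/
open Finset

/-! On `K_n`, if the target `s` cannot be entered in one step from the vertex `v`, the
hitting-time equation at `v` reads `n h(v) = 2(n - 1) + ∑_w h(w)` with `h(w) = H̃(w, s)`. If this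
holds at every vertex except `c`, summing over `v ≠ c` forces `h(v) = 2(n - 1) + h(c)` for all
`v ≠ c`. For `s = c` this gives `H̃(b, c) = 2(n - 1)`, and for `s = s_{cd}` it gives
`H̃(b, s_{cd}) = H̃(b, c) + H̃(c, s_{cd})`; it also turns the equation at `c`, whose `d`-term
vanishes, into a linear equation for `H̃(c, s_{cd})`. -/

lemma cast_card_univ_erase {ι : Type*} [Fintype ι] [DecidableEq ι] (c : ι) :
    (#(univ.erase c) : ℝ) = Fintype.card ι - 1 := by
  rw [card_erase_of_mem (mem_univ c), card_univ, Nat.cast_sub (Fintype.card_pos_iff.2 ⟨c⟩),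
    Nat.cast_one]

lemma eq_add_of_card_mul_eq_add_sum {ι : Type*} [Fintype ι] [DecidableEq ι] {x : ι → ℝ}
    {K : ℝ} {c : ι} (h : ∀ v ≠ c, Fintype.card ι * x v = K + ∑ i, x i) {v : ι}
    (hv : v ≠ c) : x v = K + x c := by
  have hsum : Fintype.card ι * (∑ i, x i - x c) = (Fintype.card ι - 1) * (K + ∑ i, x i) := by
    rw [← sum_erase_eq_sub (mem_univ c), mul_sum,
      sum_congr rfl fun w hw => h w (ne_of_mem_erase hw), sum_const, nsmul_eq_mul,
      cast_card_univ_erase]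
  have hcard : (Fintype.card ι : ℝ) ≠ 0 := by
    exact_mod_cast (Fintype.card_pos_iff.2 ⟨c⟩).ne'
  refine mul_left_cancel₀ hcard ?_
  linear_combination h v hv + hsum

namespace NAState

section

variable {V : Type*} {G : SimpleGraph V}

@[simp]
lemma orig_inj {v w : V} : (orig v : NAState V G) = orig w ↔ v = w := Sum.inl_injective.eq_iff

@[simp]
lemma intm_inj {a b c d : V} {hab : G.Adj a b} {hcd : G.Adj c d} :
    intm a b hab = intm c d hcd ↔ (a, b) = (c, d) :=
  Sum.inr_injective.eq_iff.trans Subtype.ext_iff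

@[simp]
lemma intm_ne_orig {a b v : V} {h : G.Adj a b} : intm a b h ≠ orig v := Sum.inr_ne_inl

@[simp]
lemma orig_ne_intm {a b v : V} {h : G.Adj a b} : orig v ≠ intm a b h := Sum.inl_ne_inr

variable [Fintype V] [DecidableRel G.Adj] {Ht : NAState V G → NAState V G → ℝ}

structure IsHittingTime (Ht : NAState V G → NAState V G → ℝ) : Prop where
  self_eq_zero : ∀ s, Ht s s = 0
  orig_eq : ∀ v s, orig v ≠ s →
    Ht (orig v) s = 1 + (1 / (G.degree v : ℝ)) * asSum (fun z => Ht z s) (orig v)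
  intm_eq : ∀ a b (h : G.Adj a b) s, intm a b h ≠ s → Ht (intm a b h) s = 1 + Ht (orig b) s

lemma asSum_orig (f : NAState V G → ℝ) (v : V) (F : V → ℝ)
    (hF : ∀ w (h : G.Adj v w), f (intm v w h) = F w) :
    asSum f (orig v) = ∑ w ∈ G.neighborFinset v, F w := by
  rw [← sum_attach]
  exact sum_congr rfl fun w _ => hF w.1 _

lemma IsHittingTime.degree_mul_orig (hH : IsHittingTime Ht) {v : V} {s : NAState V G}
    (hvs : orig v ≠ s) (F : V → ℝ) (hF : ∀ w (h : G.Adj v w), Ht (intm v w h) s = F w) :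
    G.degree v * Ht (orig v) s = G.degree v + ∑ w ∈ G.neighborFinset v, F w := by
  rw [hH.orig_eq v s hvs, asSum_orig _ v F hF]
  rcases eq_or_ne (G.degree v : ℝ) 0 with hdeg | hdeg
  · -- `1 / 0 = 0` in `ℝ`, but then `v` has no neighbours and the sum is empty anyway
    have : G.neighborFinset v = ∅ := by
      rw [← card_eq_zero, G.card_neighborFinset_eq_degree]; exact_mod_cast hdeg
    simp [this, hdeg]
  · field_simp

end

section Complete

variable {V : Type*} [Fintype V] [DecidableEq V] [DecidableRel (⊤ : SimpleGraph V).Adj]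
  {Ht : NAState V ⊤ → NAState V ⊤ → ℝ}

lemma IsHittingTime.card_sub_one_mul_orig_top (hH : IsHittingTime Ht) {v : V}
    {s : NAState V ⊤} (hvs : orig v ≠ s) (F : V → ℝ)
    (hF : ∀ w (h : (⊤ : SimpleGraph V).Adj v w), Ht (intm v w h) s = F w) :
    (Fintype.card V - 1 : ℝ) * Ht (orig v) s =
      Fintype.card V - 1 + ∑ w ∈ univ.erase v, F w := by
  have hnbr : (⊤ : SimpleGraph V).neighborFinset v = univ.erase v := by
    ext w; simp [ne_comm]
  have hdeg : ((⊤ : SimpleGraph V).degree v : ℝ) = Fintype.card V - 1 := by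
    rw [← SimpleGraph.card_neighborFinset_eq_degree, hnbr, cast_card_univ_erase]
  rw [← hdeg, ← hnbr]
  exact hH.degree_mul_orig hvs F hF

lemma IsHittingTime.card_mul_orig_top (hH : IsHittingTime Ht) {v : V} {s : NAState V ⊤}
    (hvs : orig v ≠ s) (hs : ∀ w (h : (⊤ : SimpleGraph V).Adj v w), intm v w h ≠ s) :
    Fintype.card V * Ht (orig v) s = 2 * (Fintype.card V - 1) + ∑ w, Ht (orig w) s := by
  have h := hH.card_sub_one_mul_orig_top hvs (fun w => 1 + Ht (orig w) s)
    fun w h => hH.intm_eq v w h s (hs w h)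
  rw [sum_add_distrib, sum_const, nsmul_one, cast_card_univ_erase,
    sum_erase_eq_sub (mem_univ v)] at h
  linear_combination h

lemma IsHittingTime.orig_orig_top (hH : IsHittingTime Ht) {b c : V} (hbc : b ≠ c) :
    Ht (orig b) (orig c) = 2 * (Fintype.card V - 1) := by
  have h := eq_add_of_card_mul_eq_add_sum (x := fun v => Ht (orig v) (orig c))
    (fun v hv => hH.card_mul_orig_top (by simpa using hv) fun _ _ => intm_ne_orig) hbc
  simpa [hH.self_eq_zero] using h

lemma IsHittingTime.orig_intm_top_of_ne (hH : IsHittingTime Ht) {c d v : V}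
    (hcd : (⊤ : SimpleGraph V).Adj c d) (hv : v ≠ c) :
    Ht (orig v) (intm c d hcd) = 2 * (Fintype.card V - 1) + Ht (orig c) (intm c d hcd) :=
  eq_add_of_card_mul_eq_add_sum (x := fun v => Ht (orig v) (intm c d hcd))
    (fun v hv => hH.card_mul_orig_top (orig_ne_intm (h := hcd)) fun _ _ => by simp [hv]) hv

lemma IsHittingTime.orig_intm_self_top (hH : IsHittingTime Ht) {c d : V}
    (hcd : (⊤ : SimpleGraph V).Adj c d) :
    Ht (orig c) (intm c d hcd) = 2 * ((Fintype.card V : ℝ) - 1) - 1 +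
      ((Fintype.card V : ℝ) - 2) * (2 * ((Fintype.card V : ℝ) - 1)) := by
  set m := 1 + (2 * ((Fintype.card V : ℝ) - 1) + Ht (orig c) (intm c d hcd))
  have h := hH.card_sub_one_mul_orig_top (orig_ne_intm (v := c) (h := hcd))
    (fun w => m - if w = d then m else 0) fun w h => by
      by_cases hwd : w = d
      · subst hwd
        simp [hH.self_eq_zero]
      · rw [if_neg hwd, sub_zero, hH.intm_eq c w h _ (by simp [hwd]),
          hH.orig_intm_top_of_ne hcd h.ne']
  rw [sum_sub_distrib, sum_const, sum_ite_eq', if_pos (mem_erase.2 ⟨hcd.ne', mem_univ d⟩),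
    nsmul_eq_mul, cast_card_univ_erase] at h
  linear_combination h

lemma IsHittingTime.orig_intm_top (hH : IsHittingTime Ht) {b c d : V}
    (hcd : (⊤ : SimpleGraph V).Adj c d) :
    Ht (orig b) (intm c d hcd) = Ht (orig b) (orig c) + Ht (orig c) (intm c d hcd) := by
  rcases eq_or_ne b c with rfl | hbc
  · rw [hH.self_eq_zero, zero_add]
  · rw [hH.orig_intm_top_of_ne hcd hbc, hH.orig_orig_top hbc]

end Complete

end NAState

theorem stmt16_general (n : ℕ)
    [inst : DecidableRel (⊤ : SimpleGraph (Fin n)).Adj]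
    (Ht : NAState (Fin n) (⊤ : SimpleGraph (Fin n)) →
      NAState (Fin n) (⊤ : SimpleGraph (Fin n)) → ℝ)
    (hHt0 : ∀ s, Ht s s = 0)
    (hHtorig : ∀ (v : Fin n) (s : NAState (Fin n) (⊤ : SimpleGraph (Fin n))),
      NAState.orig v ≠ s →
      Ht (NAState.orig v) s =
        1 + (1 / ((⊤ : SimpleGraph (Fin n)).degree v : ℝ)) *
          NAState.asSum (fun z => Ht z s) (NAState.orig v))
    (hHtintm : ∀ (a b : Fin n) (h : (⊤ : SimpleGraph (Fin n)).Adj a b)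
      (s : NAState (Fin n) (⊤ : SimpleGraph (Fin n))), NAState.intm a b h ≠ s →
      Ht (NAState.intm a b h) s = 1 + Ht (NAState.orig b) s)
    (a b c d : Fin n) (hab : (⊤ : SimpleGraph (Fin n)).Adj a b)
    (hcd : (⊤ : SimpleGraph (Fin n)).Adj c d) (hne : (a, b) ≠ (c, d)) :
    Ht (NAState.intm a b hab) (NAState.intm c d hcd) =
        1 + Ht (NAState.orig b) (NAState.orig c) + Ht (NAState.orig c) (NAState.intm c d hcd) ∧
      (b ≠ c → Ht (NAState.orig b) (NAState.orig c) = 2 * ((n : ℝ) - 1)) ∧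
      Ht (NAState.orig c) (NAState.intm c d hcd) =
        2 * ((n : ℝ) - 1) - 1 + ((n : ℝ) - 2) * (2 * ((n : ℝ) - 1)) := by
  have hH : NAState.IsHittingTime Ht := ⟨hHt0, hHtorig, hHtintm⟩
  refine ⟨?_, fun hbc => by simpa using hH.orig_orig_top hbc,
    by simpa using hH.orig_intm_self_top hcd⟩
  rw [hH.intm_eq a b hab _ (by simpa using hne), hH.orig_intm_top hcd, add_assoc]

theorem stmt16 (n : ℕ) (hn : 2 ≤ n)
    [inst : DecidableRel (⊤ : SimpleGraph (Fin n)).Adj]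
    (Ht : NAState (Fin n) (⊤ : SimpleGraph (Fin n)) →
      NAState (Fin n) (⊤ : SimpleGraph (Fin n)) → ℝ)
    (hHt0 : ∀ s, Ht s s = 0)
    (hHtorig : ∀ (v : Fin n) (s : NAState (Fin n) (⊤ : SimpleGraph (Fin n))),
      NAState.orig v ≠ s →
      Ht (NAState.orig v) s =
        1 + (1 / ((⊤ : SimpleGraph (Fin n)).degree v : ℝ)) *
          NAState.asSum (fun z => Ht z s) (NAState.orig v))
    (hHtintm : ∀ (a b : Fin n) (h : (⊤ : SimpleGraph (Fin n)).Adj a b)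
      (s : NAState (Fin n) (⊤ : SimpleGraph (Fin n))), NAState.intm a b h ≠ s →
      Ht (NAState.intm a b h) s = 1 + Ht (NAState.orig b) s)
    (a b c d : Fin n) (hab : (⊤ : SimpleGraph (Fin n)).Adj a b)
    (hcd : (⊤ : SimpleGraph (Fin n)).Adj c d) (hne : (a, b) ≠ (c, d)) :
    Ht (NAState.intm a b hab) (NAState.intm c d hcd) =
        1 + Ht (NAState.orig b) (NAState.orig c) + Ht (NAState.orig c) (NAState.intm c d hcd) ∧
      (b ≠ c → Ht (NAState.orig b) (NAState.orig c) = 2 * ((n : ℝ) - 1)) ∧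
      Ht (NAState.orig c) (NAState.intm c d hcd) =
        2 * ((n : ℝ) - 1) - 1 + ((n : ℝ) - 2) * (2 * ((n : ℝ) - 1)) :=
  stmt16_general n (inst := inst) Ht hHt0 hHtorig hHtintm a b c d hab hcd hne
end
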